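/- arXiv:2408.16127 — 2 statements merged into one kernel-verified Lean document; each statement's English description precedes it below -/
import Mathlib

section
/- Let Λ = kQ/I be a basic connected finite-dimensional algebra over an algebraically closed field given by a quiver with admissible relations, and fix a vertex t. The object L(Λe_t) of P¹(Λ), given by the map φ_t : ⊕_{α : t→s} Λe_s → Λe_t whose components are right multiplications by the arrows starting at t, is indecomposable in P¹(Λ). -/
/-!
Write `J` for the Jacobson radical of `Λ`. Every endomorphism of a module `M` preserves `J • M`,
so an idempotent `e` of `M` whose top `M / J • M` is simple either has `range e ≤ J • M` or,
because `1 - e` kills `range e`, has `range (1 - e) ≤ J • M`. By Nakayama's lemma an idempotent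
with range inside `J • M` vanishes (its range `R` satisfies `R = e R ≤ J • R`), so `P₂` has only
the idempotents `0` and `1`. Finally `e₂ = 0` forces `φ ∘ e₁ = 0` and `e₂ = 1` forces
`φ ∘ (1 - e₁) = 0`, and an idempotent killed by `φ` ranges in `ker φ ≤ J • P₁`, hence vanishes.
-/

namespace IsIdempotentElem

variable {Λ M : Type*} [Ring Λ] [AddCommGroup M] [Module Λ M] {e : Module.End Λ M}

lemma eq_zero_of_range_le_jacobson_smul_top [Module.Finite Λ M] (he : IsIdempotentElem e)
    (hrange : LinearMap.range e ≤ (⊥ : Ideal Λ).jacobson • (⊤ : Submodule Λ M)) : e = 0 := by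
  have hfg : (LinearMap.range e).FG := by
    simpa only [Submodule.map_top] using Module.Finite.fg_top.map e
  have hle : LinearMap.range e ≤ Ring.jacobson Λ • LinearMap.range e :=
    calc LinearMap.range e = (LinearMap.range e).map e := by
          rw [← LinearMap.range_comp, ← Module.End.mul_eq_comp, he.eq]
      _ ≤ ((⊥ : Ideal Λ).jacobson • (⊤ : Submodule Λ M)).map e := Submodule.map_mono hrange
      _ = Ring.jacobson Λ • LinearMap.range e := by
          rw [Submodule.map_smul'', Submodule.map_top, Ideal.jacobson_bot]
  exact LinearMap.range_eq_bot.mp (hfg.eq_bot_of_le_jacobson_smul hle)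

lemma range_le_or_range_one_sub_le_jacobson_smul_top (he : IsIdempotentElem e)
    (hcoatom : IsCoatom ((⊥ : Ideal Λ).jacobson • (⊤ : Submodule Λ M))) :
    LinearMap.range e ≤ (⊥ : Ideal Λ).jacobson • ⊤ ∨
      LinearMap.range (1 - e) ≤ (⊥ : Ideal Λ).jacobson • ⊤ := by
  set N := (⊥ : Ideal Λ).jacobson • (⊤ : Submodule Λ M)
  rcases (hcoatom.le_iff.mp (le_sup_right : N ≤ LinearMap.range e ⊔ N)) with htop | hN
  · right
    have hkill : (LinearMap.range e).map (1 - e) = ⊥ := by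
      rw [← LinearMap.range_comp, ← Module.End.mul_eq_comp, sub_mul, one_mul, he.eq, sub_self,
        LinearMap.range_zero]
    calc LinearMap.range (1 - e) = (LinearMap.range e ⊔ N).map (1 - e) := by
          rw [htop, Submodule.map_top]
      _ ≤ N := by
          rw [Submodule.map_sup, hkill, bot_sup_eq, Submodule.map_smul'']
          exact smul_mono_right _ le_top
  · exact Or.inl (hN ▸ le_sup_left)

lemma eq_zero_or_one_of_isCoatom_jacobson_smul_top [Module.Finite Λ M]
    (he : IsIdempotentElem e)
    (hcoatom : IsCoatom ((⊥ : Ideal Λ).jacobson • (⊤ : Submodule Λ M))) : e = 0 ∨ e = 1 := by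
  refine (he.range_le_or_range_one_sub_le_jacobson_smul_top hcoatom).imp
    he.eq_zero_of_range_le_jacobson_smul_top fun h ↦ ?_
  exact (sub_eq_zero.mp (he.one_sub.eq_zero_of_range_le_jacobson_smul_top h)).symm

lemma eq_zero_of_comp_eq_zero [Module.Finite Λ M] {N : Type*} [AddCommGroup N] [Module Λ N]
    {φ : M →ₗ[Λ] N} (he : IsIdempotentElem e)
    (hker : LinearMap.ker φ ≤ (⊥ : Ideal Λ).jacobson • (⊤ : Submodule Λ M))
    (hφe : φ ∘ₗ e = 0) : e = 0 :=
  he.eq_zero_of_range_le_jacobson_smul_top <|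
    (LinearMap.range_le_ker_iff.mpr hφe).trans hker

end IsIdempotentElem

theorem stmt2_general (k Λ : Type*) [Field k] [Ring Λ] [Algebra k Λ]
    (P₁ P₂ : Type*) [AddCommGroup P₁] [AddCommGroup P₂]
    [Module Λ P₁] [Module Λ P₂] [Module k P₁] [Module k P₂]
    [IsScalarTower k Λ P₁] [IsScalarTower k Λ P₂]
    [FiniteDimensional k P₁] [FiniteDimensional k P₂]
    (φ : P₁ →ₗ[Λ] P₂)
    (hker : LinearMap.ker φ ≤ (⊥ : Ideal Λ).jacobson • (⊤ : Submodule Λ P₁))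
    (hsimple : IsSimpleModule Λ (P₂ ⧸ ((⊥ : Ideal Λ).jacobson • (⊤ : Submodule Λ P₂)))) :
    ∀ (e₁ : Module.End Λ P₁) (e₂ : Module.End Λ P₂),
      IsIdempotentElem e₁ → IsIdempotentElem e₂ →
      φ.comp e₁ = e₂.comp φ →
      (e₁ = 0 ∧ e₂ = 0) ∨ (e₁ = 1 ∧ e₂ = 1) := by
  intro e₁ e₂ he₁ he₂ hcomm
  have := Module.Finite.of_restrictScalars_finite k Λ P₁
  have := Module.Finite.of_restrictScalars_finite k Λ P₂
  rcases he₂.eq_zero_or_one_of_isCoatom_jacobson_smul_top (isSimpleModule_iff_isCoatom.mp hsimple)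
    with rfl | rfl
  · exact Or.inl ⟨he₁.eq_zero_of_comp_eq_zero hker (by rw [hcomm, LinearMap.zero_comp]), rfl⟩
  · refine Or.inr ⟨?_, rfl⟩
    have hφ : φ ∘ₗ (1 - e₁) = 0 := by
      simp only [LinearMap.comp_sub, hcomm, Module.End.one_eq_id, LinearMap.comp_id,
        LinearMap.id_comp, sub_self]
    exact (sub_eq_zero.mp (he₁.one_sub.eq_zero_of_comp_eq_zero hker hφ)).symm

/-- Indecomposability of `L(Λe_t)` in `P¹(Λ)` (Lemma 2.4, first part).
`Λ = kQ/I` is a basic connected finite-dimensional algebra over an algebraically closed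
field, and `φ : P₁ → P₂` plays the role of
`φ_t : ⊕_{α : t→s} Λe_s → Λe_t`, a minimal projective presentation of the simple module
`S_t`: both modules are finite-dimensional projectives, the image of `φ` is exactly
`rad(Λ)·P₂` (so that `Coker φ = P₂/rad(Λ)P₂ = S_t` is simple) and `ker φ ⊆ rad(Λ)·P₁`
(minimality).  Indecomposability of the object `(P₁, P₂, φ)` of `P¹(Λ)` is expressed, as
usual in an additive category with split idempotents, by the fact that every idempotent
endomorphism `(e₁, e₂)` of the object (a commuting square `φ ∘ e₁ = e₂ ∘ φ` with `e₁, e₂`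
idempotent) is trivial. -/
theorem stmt2 (k Λ : Type*) [Field k] [IsAlgClosed k] [Ring Λ] [Algebra k Λ]
    [FiniteDimensional k Λ]
    (P₁ P₂ : Type*) [AddCommGroup P₁] [AddCommGroup P₂]
    [Module Λ P₁] [Module Λ P₂] [Module k P₁] [Module k P₂]
    [IsScalarTower k Λ P₁] [IsScalarTower k Λ P₂]
    [FiniteDimensional k P₁] [FiniteDimensional k P₂]
    [Module.Projective Λ P₁] [Module.Projective Λ P₂]
    [Nontrivial P₂]
    (φ : P₁ →ₗ[Λ] P₂)
    (hrange : LinearMap.range φ = (⊥ : Ideal Λ).jacobson • (⊤ : Submodule Λ P₂))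
    (hker : LinearMap.ker φ ≤ (⊥ : Ideal Λ).jacobson • (⊤ : Submodule Λ P₁))
    (hsimple : IsSimpleModule Λ (P₂ ⧸ ((⊥ : Ideal Λ).jacobson • (⊤ : Submodule Λ P₂)))) :
    ∀ (e₁ : Module.End Λ P₁) (e₂ : Module.End Λ P₂),
      IsIdempotentElem e₁ → IsIdempotentElem e₂ →
      φ.comp e₁ = e₂.comp φ →
      (e₁ = 0 ∧ e₂ = 0) ∨ (e₁ = 1 ∧ e₂ = 1) :=
  stmt2_general k Λ P₁ P₂ φ hker hsimple
end

section
/- Let k be a field and c(x,y) = Σ_{j=0}^{m} a_j(y) x^j ∈ k[x,y] a nonzero polynomial. For a k-linear endomorphism q of k(x), define q_c ∈ End_k(k(x)) by q_c(z) = Σ_{j=0}^{m} a_j(x)·q(x^j·z) for z ∈ k(x). Assume k is algebraically closed. Then the map End_k(k(x)) → End_k(k(x)), q ↦ q_c, is surjective: for every k-linear map p : k(x) → k(x) there exists a k-linear q with q_c = p. -/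
/-!
Let `x ∈ K` be the image of `X`. A `k`-linear `q : K → K` is the same as a `k[X]`-linear map
`k[X] ⊗[k] K → K` (with `k[X]` acting on the target through `x`), and under this correspondence
`q ↦ q_c` becomes precomposition with multiplication by `γ = c(1 ⊗ x)`, i.e. by
`∑ⱼ cⱼ ⊗ xʲ`. Since `x` is transcendental over `k` and `k[X] ⊗[k] K ≅ K[X]` is a domain,
`γ ≠ 0` and multiplication by `γ` is injective. A field containing `k[X]` is an injective
`k[X]`-module (Baer's criterion over a PID), so precomposition with an injection is surjective.
-/

open Polynomial TensorProduct

theorem Module.Baer.of_isPrincipalIdealRing {R K : Type*} [CommRing R] [IsPrincipalIdealRing R]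
    [Field K] [Algebra R K] (hinj : Function.Injective (algebraMap R K)) : Module.Baer R K := by
  intro I g
  obtain ⟨d, rfl⟩ := Submodule.IsPrincipal.principal I
  let gd := g ⟨d, Submodule.mem_span_singleton_self d⟩
  refine ⟨LinearMap.toSpanSingleton R K (gd / algebraMap R K d), fun x hx => ?_⟩
  obtain ⟨r, rfl⟩ := Submodule.mem_span_singleton.mp hx
  have hrd : (⟨r • d, hx⟩ : Submodule.span R {d}) =
      r • ⟨d, Submodule.mem_span_singleton_self d⟩ := rfl
  have hdiv : d • (gd / algebraMap R K d) = gd := by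
    by_cases hd : d = 0
    · subst hd
      exact (zero_smul R _).trans (map_zero g).symm
    · rw [Algebra.smul_def, mul_div_cancel₀ _ ((map_ne_zero_iff _ hinj).mpr hd)]
  rw [hrd, map_smul, LinearMap.toSpanSingleton_apply, hdiv, map_smul]

section TensorPolynomial

variable (R A : Type*) [CommRing R] [CommRing A] [Algebra R A]

noncomputable def Polynomial.tensorAlgEquiv : R[X] ⊗[R] A ≃ₐ[R] A[X] :=
  (Algebra.TensorProduct.comm R R[X] A).trans (polyEquivTensor R A).symm

instance [IsDomain A] : IsDomain (R[X] ⊗[R] A) :=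
  (tensorAlgEquiv R A).toMulEquiv.isDomain

variable {R A}

theorem Transcendental.one_tmul {a : A} (ha : Transcendental R a) :
    Transcendental R[X] ((1 : R[X]) ⊗ₜ[R] a) := by
  rw [transcendental_iff_injective] at ha ⊢
  -- Through `R[X] ⊗[R] A ≅ A[X]`, evaluation at `1 ⊗ a` becomes "swap the two variables of
  -- `R[X][X]`, then apply `aeval a` to the coefficients".
  have key : (tensorAlgEquiv R A : R[X] ⊗[R] A →+* A[X]).comp
        (Polynomial.aeval (1 ⊗ₜ[R] a)).toRingHom =
      (mapRingHom (Polynomial.aeval a).toRingHom).comp (Bivariate.swap (R := R)).toRingHom := by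
    ext <;> simp [tensorAlgEquiv, Bivariate.swap_C_C, Bivariate.swap_X, Bivariate.swap_Y,
      coeff_one, coeff_C]
  refine Function.Injective.of_comp (f := tensorAlgEquiv R A) ?_
  convert (map_injective _ ha).comp (Bivariate.swap (R := R)).injective using 1
  exact congrArg DFunLike.coe key

end TensorPolynomial

theorem exists_sum_coeff_mul_apply_pow_mul_eq {k K : Type*} [Field k] [Field K] [Algebra k K]
    [Algebra k[X] K] [IsScalarTower k k[X] K] (hK : Function.Injective (algebraMap k[X] K))
    (c : k[X][X]) (hc : c ≠ 0) (p : K →ₗ[k] K) :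
    ∃ q : K →ₗ[k] K, ∀ z : K,
      ∑ j ∈ Finset.range (c.natDegree + 1),
          algebraMap k[X] K (c.coeff j) * q (algebraMap k[X] K X ^ j * z) = p z := by
  set x := algebraMap k[X] K X
  have hx : Transcendental k x := by
    rw [transcendental_iff_injective]
    convert hK
    ext f
    simp [x, aeval_algebraMap_apply]
  set γ : k[X] ⊗[k] K := aeval (1 ⊗ₜ x) c with hγ_def
  have hγ : γ ≠ 0 := (map_ne_zero_iff _ (transcendental_iff_injective.mp hx.one_tmul)).mpr hc
  obtain ⟨h, hh⟩ := (Module.Baer.of_isPrincipalIdealRing hK).extension_property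
    (LinearMap.mulLeft k[X] γ) (mul_right_injective₀ hγ) (p.liftBaseChange k[X])
  refine ⟨h.restrictScalars k ∘ₗ TensorProduct.mk k k[X] K 1, fun z => ?_⟩
  calc _ = h (γ * (1 ⊗ₜ z)) := by
        rw [hγ_def, aeval_eq_sum_range, Finset.sum_mul, map_sum]
        refine Finset.sum_congr rfl fun j _ => ?_
        simp [← Algebra.smul_def]
    _ = p z := by
      rw [← LinearMap.mulLeft_apply (R := k[X]), ← LinearMap.comp_apply, hh,
        LinearMap.liftBaseChange_tmul, one_smul]

theorem stmt8_general (k : Type*) [Field k]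
    (c : Polynomial (Polynomial k)) (hc : c ≠ 0)
    (p : RatFunc k →ₗ[k] RatFunc k) :
    ∃ q : RatFunc k →ₗ[k] RatFunc k, ∀ z : RatFunc k,
      ∑ j ∈ Finset.range (c.natDegree + 1),
          algebraMap (Polynomial k) (RatFunc k) (c.coeff j) *
            q ((algebraMap (Polynomial k) (RatFunc k) X) ^ j * z)
        = p z :=
  exists_sum_coeff_mul_apply_pow_mul_eq (RatFunc.algebraMap_injective k) c hc p

/-- **Convolution Lemma.** Let `k` be an algebraically closed field and
`c(x,y) = Σ_{j} a_j(y) x^j ∈ k[x,y]` nonzero (coded as a polynomial in `x` with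
coefficients `a_j ∈ k[y]`).  For a `k`-linear endomorphism `q` of `k(x)`, define
`q_c(z) = Σ_j a_j(x)·q(x^j·z)`.  Then the map `q ↦ q_c` on `End_k(k(x))` is surjective:
for every `k`-linear `p : k(x) → k(x)` there is a `k`-linear `q` with `q_c = p`. -/
theorem stmt8 (k : Type*) [Field k] [IsAlgClosed k]
    (c : Polynomial (Polynomial k)) (hc : c ≠ 0)
    (p : RatFunc k →ₗ[k] RatFunc k) :
    ∃ q : RatFunc k →ₗ[k] RatFunc k, ∀ z : RatFunc k,
      ∑ j ∈ Finset.range (c.natDegree + 1),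
          algebraMap (Polynomial k) (RatFunc k) (c.coeff j) *
            q ((algebraMap (Polynomial k) (RatFunc k) X) ^ j * z)
        = p z :=
  stmt8_general k c hc p
end
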